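/- arXiv:2408.17205 — 3 statements merged into one kernel-verified Lean document; each statement's English description precedes it below -/
import Mathlib

section
/- Let Z_1,...,Z_N be i.i.d. Bernoulli(r_1), r_0 = 1 − r_1, and Y_i = α_i + θ_i Z_i + Σ_j γ̃_{ij} Z_j with γ̃_{ii} = 0. Then Var((1/N) Σ_i [Y_i Z_i / r_1 − Y_i(1−Z_i)/r_0]) = (1/(N² r_1 r_0)) Σ_i (r_0 Y_{Z_i=1} + r_1 Y_{Z_i=0})² + (1/N²) Σ_{i≠j} γ̃_{ij}² + (1/N²) Σ_{i≠j} γ̃_{ij} γ̃_{ji}, where Y_{Z_i=z} = α_i + θ_i z + r_1 Σ_j γ̃_{ij}. -/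
open MeasureTheory ProbabilityTheory

/-- The law of `N` i.i.d. Bernoulli(`r`) coins, as a measure on `Fin N → Bool`. -/
noncomputable def bernoulliVec (N : ℕ) (r : ℝ) (h : ENNReal.ofReal r ≤ 1) :
    Measure (Fin N → Bool) :=
  Measure.pi fun _ => (PMF.bernoulli (Real.toNNReal r) (ENNReal.coe_le_one_iff.mp h)).toMeasure

/-- The real-valued treatment indicator `Z_i`. -/
def coin {N : ℕ} (i : Fin N) (ω : Fin N → Bool) : ℝ := if ω i then 1 else 0

/-- The HATE-model outcome `Y_i = α_i + θ_i Z_i + ∑_j γ̃_{ij} Z_j`. -/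
def outcome {N : ℕ} (α θ : Fin N → ℝ) (γ : Fin N → Fin N → ℝ)
    (i : Fin N) (ω : Fin N → Bool) : ℝ :=
  α i + θ i * coin i ω + ∑ j, γ i j * coin j ω

/-- The conditional mean outcome `Y_{Z_i=z} = α_i + θ_i z + r_1 ∑_j γ̃_{ij}`. -/
def condMeanOutcome {N : ℕ} (α θ : Fin N → ℝ) (γ : Fin N → Fin N → ℝ)
    (r1 : ℝ) (i : Fin N) (z : ℝ) : ℝ :=
  α i + θ i * z + r1 * ∑ j, γ i j

set_option linter.unnecessarySeqFocus false

namespace HTaux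

/-- the weight of a single coin outcome -/
def bw (r1 : ℝ) (b : Bool) : ℝ := if b then r1 else 1 - r1

/-- the centered value of a coin -/
def bval (r1 : ℝ) (b : Bool) : ℝ := (if b then 1 else 0) - r1

/-- finite-sum expectation operator -/
noncomputable def EE (r1 : ℝ) {N : ℕ} (f : (Fin N → Bool) → ℝ) : ℝ :=
  ∑ ω : Fin N → Bool, (∏ i, bw r1 (ω i)) * f ω

variable {N : ℕ} {r1 : ℝ}

lemma EE_congr (f g : (Fin N → Bool) → ℝ) (h : ∀ ω, f ω = g ω) :
    EE r1 f = EE r1 g := by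
  unfold EE; exact Finset.sum_congr rfl fun ω _ => by rw [h]

lemma EE_add (f g : (Fin N → Bool) → ℝ) :
    EE r1 (fun ω => f ω + g ω) = EE r1 f + EE r1 g := by
  unfold EE; rw [← Finset.sum_add_distrib]
  exact Finset.sum_congr rfl fun ω _ => by ring

lemma EE_mul_left (c : ℝ) (f : (Fin N → Bool) → ℝ) :
    EE r1 (fun ω => c * f ω) = c * EE r1 f := by
  unfold EE; rw [Finset.mul_sum]
  exact Finset.sum_congr rfl fun ω _ => by ring

lemma EE_sum {ι : Type*} (s : Finset ι) (f : ι → (Fin N → Bool) → ℝ) :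
    EE r1 (fun ω => ∑ i ∈ s, f i ω) = ∑ i ∈ s, EE r1 (f i) := by
  unfold EE
  rw [Finset.sum_comm]
  exact Finset.sum_congr rfl fun ω _ => by rw [Finset.mul_sum]

lemma EE_factor (g : Fin N → Bool → ℝ) :
    EE r1 (fun ω => ∏ i, g i (ω i)) =
      ∏ i, (r1 * g i true + (1 - r1) * g i false) := by
  unfold EE
  have : ∀ ω : Fin N → Bool, (∏ i, bw r1 (ω i)) * ∏ i, g i (ω i)
      = ∏ i, (bw r1 (ω i) * g i (ω i)) := fun ω => (Finset.prod_mul_distrib).symm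
  simp_rw [this]
  rw [← Fintype.piFinset_univ,
    ← Finset.prod_univ_sum (fun _ : Fin N => (Finset.univ : Finset Bool))
      (fun i b => bw r1 b * g i b)]
  exact Finset.prod_congr rfl fun i _ => by
    rw [Fintype.sum_bool]; simp [bw]

lemma EE_one : EE r1 (fun _ : Fin N → Bool => (1 : ℝ)) = 1 := by
  have := EE_factor (r1 := r1) (fun _ : Fin N => fun _ : Bool => (1 : ℝ))
  simpa using this

end HTaux

namespace HTaux
variable {N : ℕ} {r1 : ℝ}

lemma EE_single (i : Fin N) : EE r1 (fun ω => bval r1 (ω i)) = 0 := by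
  have h : ∀ ω : Fin N → Bool,
      bval r1 (ω i) = ∏ m, (if m = i then bval r1 (ω m) else 1) := by
    intro ω; rw [Finset.prod_ite_eq']; simp
  rw [EE_congr _ _ h, EE_factor (fun m b => if m = i then bval r1 b else 1)]
  apply Finset.prod_eq_zero (Finset.mem_univ i)
  simp [bval]; ring

lemma EE_pair (i k : Fin N) :
    EE r1 (fun ω => bval r1 (ω i) * bval r1 (ω k)) =
      if i = k then r1 * (1 - r1) else 0 := by
  have h : ∀ ω : Fin N → Bool,
      bval r1 (ω i) * bval r1 (ω k) =
        ∏ m, ((if m = i then bval r1 (ω m) else 1) *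
              (if m = k then bval r1 (ω m) else 1)) := by
    intro ω
    rw [Finset.prod_mul_distrib, Finset.prod_ite_eq', Finset.prod_ite_eq']; simp
  rw [EE_congr _ _ h,
    EE_factor (fun m b => (if m = i then bval r1 b else 1) *
      (if m = k then bval r1 b else 1))]
  by_cases hik : i = k
  · subst hik; rw [if_pos rfl]
    have hval : ∀ m : Fin N,
        r1 * ((if m = i then bval r1 true else 1) * (if m = i then bval r1 true else 1)) +
        (1 - r1) * ((if m = i then bval r1 false else 1) * (if m = i then bval r1 false else 1)) =
          if m = i then r1 * (1 - r1) else 1 := by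
      intro m; by_cases hm : m = i <;> simp [hm, bval] <;> ring
    simp_rw [hval]; rw [Finset.prod_ite_eq']; simp
  · rw [if_neg hik]
    apply Finset.prod_eq_zero (Finset.mem_univ i)
    simp [hik, bval]; ring
end HTaux

namespace HTaux
variable {N : ℕ} {r1 : ℝ}

lemma EE_triple (i k l : Fin N) (hkl : k ≠ l) :
    EE r1 (fun ω => bval r1 (ω i) * bval r1 (ω k) * bval r1 (ω l)) = 0 := by
  have h : ∀ ω : Fin N → Bool,
      bval r1 (ω i) * bval r1 (ω k) * bval r1 (ω l) =
        ∏ m, ((if m = i then bval r1 (ω m) else 1) *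
              (if m = k then bval r1 (ω m) else 1) *
              (if m = l then bval r1 (ω m) else 1)) := by
    intro ω
    rw [Finset.prod_mul_distrib, Finset.prod_mul_distrib,
      Finset.prod_ite_eq', Finset.prod_ite_eq', Finset.prod_ite_eq']; simp
  rw [EE_congr _ _ h,
    EE_factor (fun m b => (if m = i then bval r1 b else 1) *
      (if m = k then bval r1 b else 1) * (if m = l then bval r1 b else 1))]
  by_cases hik : i = k
  · apply Finset.prod_eq_zero (Finset.mem_univ l)
    have h1 : l ≠ i := fun h => hkl ((h.trans hik).symm)
    simp [h1, hkl.symm, bval]; ring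
  · by_cases hil : i = l
    · apply Finset.prod_eq_zero (Finset.mem_univ k)
      have h1 : k ≠ i := fun h => hkl (h.trans hil)
      simp [h1, hkl, bval]; ring
    · apply Finset.prod_eq_zero (Finset.mem_univ i)
      simp [hik, hil, bval]; ring

lemma EE_quad (i j k l : Fin N) (hij : i ≠ j) (hkl : k ≠ l) :
    EE r1 (fun ω => bval r1 (ω i) * bval r1 (ω j) * (bval r1 (ω k) * bval r1 (ω l))) =
      (if i = k ∧ j = l then (r1 * (1 - r1)) ^ 2 else 0) +
      (if i = l ∧ j = k then (r1 * (1 - r1)) ^ 2 else 0) := by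
  have h : ∀ ω : Fin N → Bool,
      bval r1 (ω i) * bval r1 (ω j) * (bval r1 (ω k) * bval r1 (ω l)) =
        ∏ m, ((if m = i then bval r1 (ω m) else 1) *
              (if m = j then bval r1 (ω m) else 1) *
              ((if m = k then bval r1 (ω m) else 1) *
               (if m = l then bval r1 (ω m) else 1))) := by
    intro ω
    rw [Finset.prod_mul_distrib, Finset.prod_mul_distrib, Finset.prod_mul_distrib,
      Finset.prod_ite_eq', Finset.prod_ite_eq', Finset.prod_ite_eq', Finset.prod_ite_eq']
    simp
  rw [EE_congr _ _ h,
    EE_factor (fun m b => (if m = i then bval r1 b else 1) *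
      (if m = j then bval r1 b else 1) *
      ((if m = k then bval r1 b else 1) * (if m = l then bval r1 b else 1)))]
  by_cases hc1 : i = k ∧ j = l
  · obtain ⟨hik, hjl⟩ := hc1
    subst hik; subst hjl
    have hval : ∀ m : Fin N,
        r1 * ((if m = i then bval r1 true else 1) * (if m = j then bval r1 true else 1) *
          ((if m = i then bval r1 true else 1) * (if m = j then bval r1 true else 1))) +
        (1 - r1) * ((if m = i then bval r1 false else 1) * (if m = j then bval r1 false else 1) *
          ((if m = i then bval r1 false else 1) * (if m = j then bval r1 false else 1))) =
          (if m = i then r1 * (1 - r1) else 1) * (if m = j then r1 * (1 - r1) else 1) := by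
      intro m
      by_cases h1 : m = i
      · subst h1; simp [hij, bval]; ring
      · by_cases h2 : m = j
        · subst h2; simp [h1, bval]; ring
        · simp [h1, h2]
    simp_rw [hval]
    rw [Finset.prod_mul_distrib, Finset.prod_ite_eq', Finset.prod_ite_eq']
    have hne2 : ¬(i = j ∧ j = i) := fun h => hij h.1
    simp [hne2]; ring
  · by_cases hc2 : i = l ∧ j = k
    · obtain ⟨hil, hjk⟩ := hc2
      subst hil; subst hjk
      have hval : ∀ m : Fin N,
          r1 * ((if m = i then bval r1 true else 1) * (if m = j then bval r1 true else 1) *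
            ((if m = j then bval r1 true else 1) * (if m = i then bval r1 true else 1))) +
          (1 - r1) * ((if m = i then bval r1 false else 1) * (if m = j then bval r1 false else 1) *
            ((if m = j then bval r1 false else 1) * (if m = i then bval r1 false else 1))) =
            (if m = i then r1 * (1 - r1) else 1) * (if m = j then r1 * (1 - r1) else 1) := by
        intro m
        by_cases h1 : m = i
        · subst h1; simp [hij, bval]; ring
        · by_cases h2 : m = j
          · subst h2; simp [h1, bval]; ring
          · simp [h1, h2]
      simp_rw [hval]
      rw [Finset.prod_mul_distrib, Finset.prod_ite_eq', Finset.prod_ite_eq']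
      have hne2 : ¬(i = j ∧ j = i) := fun h => hij h.1
      simp [hne2]; ring
    · rw [if_neg hc1, if_neg hc2, add_zero]
      by_cases hjk : j = k
      · apply Finset.prod_eq_zero (Finset.mem_univ i)
        have hik : i ≠ k := fun h => hij (h.trans hjk.symm)
        have hil : i ≠ l := fun h => hc2 ⟨h, hjk⟩
        simp [hij, hik, hil, bval]; ring
      · by_cases hjl : j = l
        · apply Finset.prod_eq_zero (Finset.mem_univ i)
          have hik : i ≠ k := fun h => hc1 ⟨h, hjl⟩
          have hil : i ≠ l := fun h => hij (h.trans hjl.symm)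
          simp [hij, hik, hil, bval]; ring
        · apply Finset.prod_eq_zero (Finset.mem_univ j)
          simp [hij.symm, hjk, hjl, bval]; ring

end HTaux

namespace HTaux
variable {N : ℕ} {r1 : ℝ}

lemma integral_eq_EE (hr0 : 0 ≤ r1) (hr1 : r1 ≤ 1) (h : ENNReal.ofReal r1 ≤ 1)
    (f : (Fin N → Bool) → ℝ) :
    ∫ ω, f ω ∂(bernoulliVec N r1 h) = EE r1 f := by
  haveI : IsProbabilityMeasure (bernoulliVec N r1 h) := by
    unfold bernoulliVec; infer_instance
  rw [integral_fintype Integrable.of_finite]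
  unfold EE
  refine Finset.sum_congr rfl fun ω _ => ?_
  have hsing : (bernoulliVec N r1 h).real {ω} = ∏ i, bw r1 (ω i) := by
    rw [measureReal_def, bernoulliVec, ← Set.univ_pi_singleton, Measure.pi_pi, ENNReal.toReal_prod]
    refine Finset.prod_congr rfl fun i _ => ?_
    rw [PMF.toMeasure_apply_singleton _ _ (measurableSet_singleton _), PMF.bernoulli_apply]
    cases hb : ω i
    · simp only [Bool.cond_false, bw, hb, if_false, Bool.false_eq_true, ENNReal.coe_toReal]
      rw [NNReal.coe_sub (by simpa using hr1), NNReal.coe_one, Real.coe_toNNReal _ hr0]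
    · simp only [Bool.cond_true, bw, hb, if_true, ENNReal.coe_toReal, Real.coe_toNNReal _ hr0]
  rw [hsing, smul_eq_mul]

end HTaux

namespace HTaux
variable {N : ℕ}

lemma term_id (r1 αi θi T C : ℝ) (h0 : r1 ≠ 0) (h1 : (1:ℝ) - r1 ≠ 0) (b : Bool) :
    (αi + θi * (if b then (1:ℝ) else 0) + T) * (if b then (1:ℝ) else 0) / r1
      - (αi + θi * (if b then (1:ℝ) else 0) + T) * (1 - (if b then (1:ℝ) else 0)) / (1 - r1)
    = (r1 * (1 - r1))⁻¹ * ((αi + (1 - r1) * θi + r1 * C) * bval r1 b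
        + bval r1 b * (T - r1 * C) + r1 * (1 - r1) * θi) := by
  cases b <;> simp only [if_true, if_false, Bool.false_eq_true, bval] <;> field_simp <;> ring

end HTaux
namespace HTaux

/-- the coefficient `r₀ Y_{Z_i=1} + r₁ Y_{Z_i=0}` -/
def avec (r1 : ℝ) {N : ℕ} (α θ : Fin N → ℝ) (γ : Fin N → Fin N → ℝ) (i : Fin N) : ℝ :=
  α i + (1 - r1) * θ i + r1 * ∑ j, γ i j

end HTaux

/-- Variance of the Horvitz–Thompson estimator of the direct average treatment effect:
`Var(τ̂_DIR) = (1/(N² r₁ r₀)) ∑_i (r₀ Y_{Z_i=1} + r₁ Y_{Z_i=0})²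
  + (1/N²) ∑_{i≠j} γ̃_{ij}² + (1/N²) ∑_{i≠j} γ̃_{ij} γ̃_{ji}`. -/
theorem horvitzThompson_direct_variance
    (N : ℕ) (hN : 1 ≤ N) (r1 : ℝ) (hr0 : 0 < r1) (hr1 : r1 < 1)
    (α θ : Fin N → ℝ) (γ : Fin N → Fin N → ℝ) (hγ : ∀ i, γ i i = 0) :
    variance (fun ω => (N : ℝ)⁻¹ * ∑ i,
        (outcome α θ γ i ω * coin i ω / r1 -
         outcome α θ γ i ω * (1 - coin i ω) / (1 - r1)))
      (bernoulliVec N r1 (ENNReal.ofReal_le_one.mpr hr1.le))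
      = (1 / ((N : ℝ) ^ 2 * r1 * (1 - r1))) *
          ∑ i, ((1 - r1) * condMeanOutcome α θ γ r1 i 1 +
                r1 * condMeanOutcome α θ γ r1 i 0) ^ 2
        + (1 / (N : ℝ) ^ 2) * ∑ i, ∑ j, (if i ≠ j then (γ i j) ^ 2 else 0)
        + (1 / (N : ℝ) ^ 2) * ∑ i, ∑ j, (if i ≠ j then γ i j * γ j i else 0) := by
  classical
  have hNne : (N : ℝ) ≠ 0 := Nat.cast_ne_zero.mpr (by omega)
  have h0 : r1 ≠ 0 := ne_of_gt hr0
  have h1 : (1 : ℝ) - r1 ≠ 0 := by linarith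
  set hle := ENNReal.ofReal_le_one.mpr hr1.le with hhle
  set μ := bernoulliVec N r1 hle with hμ
  haveI : IsProbabilityMeasure μ := by rw [hμ]; unfold bernoulliVec; infer_instance
  set X : (Fin N → Bool) → ℝ := fun ω => (N : ℝ)⁻¹ * ∑ i,
        (outcome α θ γ i ω * coin i ω / r1 -
         outcome α θ γ i ω * (1 - coin i ω) / (1 - r1)) with hXdef
  set av := HTaux.avec r1 α θ γ with hav
  set m0 : ℝ := (N : ℝ)⁻¹ * ∑ i, θ i with hm0
  set c0 : ℝ := ((N : ℝ) * (r1 * (1 - r1)))⁻¹ with hc0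
  -- pointwise decomposition
  have hpt : ∀ ω, X ω = c0 * ((∑ i, av i * HTaux.bval r1 (ω i)) +
      ∑ i, ∑ j, γ i j * (HTaux.bval r1 (ω i) * HTaux.bval r1 (ω j))) + m0 := by
    intro ω
    have hterm : ∀ i : Fin N,
        outcome α θ γ i ω * coin i ω / r1 - outcome α θ γ i ω * (1 - coin i ω) / (1 - r1)
          = (r1 * (1 - r1))⁻¹ * (av i * HTaux.bval r1 (ω i)
              + (∑ j, γ i j * (HTaux.bval r1 (ω i) * HTaux.bval r1 (ω j)))
              + r1 * (1 - r1) * θ i) := by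
      intro i
      have hbb : (∑ j, γ i j * (HTaux.bval r1 (ω i) * HTaux.bval r1 (ω j)))
          = HTaux.bval r1 (ω i) * ((∑ j, γ i j * coin j ω) - r1 * ∑ j, γ i j) := by
        have hj : ∀ j : Fin N, γ i j * (HTaux.bval r1 (ω i) * HTaux.bval r1 (ω j))
            = HTaux.bval r1 (ω i) * (γ i j * coin j ω)
              - HTaux.bval r1 (ω i) * (r1 * γ i j) := by
          intro j; simp only [HTaux.bval, coin]; ring
        rw [Finset.sum_congr rfl (fun j _ => hj j), Finset.sum_sub_distrib,
          ← Finset.mul_sum, ← Finset.mul_sum, ← Finset.mul_sum, ← mul_sub]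
      rw [hbb, hav]
      simp only [outcome, coin, HTaux.avec]
      exact HTaux.term_id r1 (α i) (θ i) (∑ j, γ i j * coin j ω) (∑ j, γ i j) h0 h1 (ω i)
    rw [hXdef]
    simp only
    rw [Finset.sum_congr rfl (fun i _ => hterm i), ← Finset.mul_sum,
      Finset.sum_add_distrib, Finset.sum_add_distrib, ← Finset.mul_sum]
    rw [hm0, hc0]
    field_simp
  -- the mean
  have hmean : ∫ x, X x ∂μ = m0 := by
    rw [hμ, HTaux.integral_eq_EE hr0.le hr1.le]
    rw [HTaux.EE_congr _ _ hpt, HTaux.EE_add, HTaux.EE_mul_left, HTaux.EE_add]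
    have e1 : HTaux.EE r1 (fun ω => ∑ i, av i * HTaux.bval r1 (ω i)) = 0 := by
      rw [HTaux.EE_sum]
      refine Finset.sum_eq_zero fun i _ => ?_
      rw [HTaux.EE_mul_left, HTaux.EE_single, mul_zero]
    have e2 : HTaux.EE r1
        (fun ω => ∑ i, ∑ j, γ i j * (HTaux.bval r1 (ω i) * HTaux.bval r1 (ω j))) = 0 := by
      rw [HTaux.EE_sum]
      refine Finset.sum_eq_zero fun i _ => ?_
      rw [HTaux.EE_sum]
      refine Finset.sum_eq_zero fun j _ => ?_
      rw [HTaux.EE_mul_left, HTaux.EE_pair]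
      by_cases hij : i = j
      · subst hij; simp [hγ i]
      · simp [hij]
    have e3 : HTaux.EE r1 (fun _ : Fin N → Bool => m0) = m0 := by
      have := HTaux.EE_mul_left (r1 := r1) (N := N) m0 (fun _ => 1)
      simp only [mul_one] at this
      rw [this, HTaux.EE_one, mul_one]
    rw [e1, e2, e3]; ring
  -- variance as integral
  have hXmem : MeasureTheory.MemLp X 2 μ := .of_discrete
  rw [variance_eq_integral hXmem.1.aemeasurable, hmean]
  rw [hμ, HTaux.integral_eq_EE hr0.le hr1.le]
  -- pointwise expansion of the square
  have hpt2 : ∀ ω, (X ω - m0) ^ 2 = c0 ^ 2 *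
      ((∑ i, ∑ k, (av i * av k) * (HTaux.bval r1 (ω i) * HTaux.bval r1 (ω k))) +
       (2 * (∑ i, ∑ k, ∑ l, (av i * γ k l) *
          (HTaux.bval r1 (ω i) * HTaux.bval r1 (ω k) * HTaux.bval r1 (ω l))) +
        ∑ i, ∑ k, ∑ j, ∑ l, (γ i j * γ k l) *
          (HTaux.bval r1 (ω i) * HTaux.bval r1 (ω j) *
            (HTaux.bval r1 (ω k) * HTaux.bval r1 (ω l))))) := by
    intro ω
    have hd : X ω - m0 = c0 * ((∑ i, av i * HTaux.bval r1 (ω i)) +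
        ∑ i, ∑ j, γ i j * (HTaux.bval r1 (ω i) * HTaux.bval r1 (ω j))) := by
      rw [hpt ω]; ring
    rw [hd, mul_pow]
    congr 1
    rw [add_sq]
    have e1 : (∑ i, av i * HTaux.bval r1 (ω i)) ^ 2
        = ∑ i, ∑ k, (av i * av k) * (HTaux.bval r1 (ω i) * HTaux.bval r1 (ω k)) := by
      rw [sq, Finset.sum_mul_sum]
      exact Finset.sum_congr rfl fun i _ => Finset.sum_congr rfl fun k _ => by ring
    have e2 : (∑ i, av i * HTaux.bval r1 (ω i)) *
        (∑ i, ∑ j, γ i j * (HTaux.bval r1 (ω i) * HTaux.bval r1 (ω j)))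
        = ∑ i, ∑ k, ∑ l, (av i * γ k l) *
            (HTaux.bval r1 (ω i) * HTaux.bval r1 (ω k) * HTaux.bval r1 (ω l)) := by
      rw [Finset.sum_mul_sum]
      refine Finset.sum_congr rfl fun i _ => Finset.sum_congr rfl fun k _ => ?_
      rw [Finset.mul_sum]
      exact Finset.sum_congr rfl fun l _ => by ring
    have e3 : (∑ i, ∑ j, γ i j * (HTaux.bval r1 (ω i) * HTaux.bval r1 (ω j))) ^ 2
        = ∑ i, ∑ k, ∑ j, ∑ l, (γ i j * γ k l) *
            (HTaux.bval r1 (ω i) * HTaux.bval r1 (ω j) *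
              (HTaux.bval r1 (ω k) * HTaux.bval r1 (ω l))) := by
      rw [sq, Finset.sum_mul_sum]
      refine Finset.sum_congr rfl fun i _ => Finset.sum_congr rfl fun k _ => ?_
      rw [Finset.sum_mul_sum]
      exact Finset.sum_congr rfl fun j _ => Finset.sum_congr rfl fun l _ => by ring
    rw [e1, e3, mul_assoc, e2, add_assoc]
  rw [HTaux.EE_congr _ _ hpt2, HTaux.EE_mul_left, HTaux.EE_add, HTaux.EE_add,
    HTaux.EE_mul_left]
  -- first piece
  have hE1 : HTaux.EE r1 (fun ω => ∑ i, ∑ k, (av i * av k) *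
      (HTaux.bval r1 (ω i) * HTaux.bval r1 (ω k))) = r1 * (1 - r1) * ∑ i, av i ^ 2 := by
    rw [HTaux.EE_sum]
    have step : ∀ i : Fin N, HTaux.EE r1 (fun ω => ∑ k, (av i * av k) *
        (HTaux.bval r1 (ω i) * HTaux.bval r1 (ω k)))
        = ∑ k, (av i * av k) * (if i = k then r1 * (1 - r1) else 0) := by
      intro i
      rw [HTaux.EE_sum]
      exact Finset.sum_congr rfl fun k _ => by rw [HTaux.EE_mul_left, HTaux.EE_pair]
    rw [Finset.sum_congr rfl fun i _ => step i]
    simp only [mul_ite, mul_zero, Finset.sum_ite_eq, Finset.mem_univ, if_true]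
    rw [Finset.mul_sum]
    exact Finset.sum_congr rfl fun i _ => by ring
  -- second piece
  have hE2 : HTaux.EE r1 (fun ω => ∑ i, ∑ k, ∑ l, (av i * γ k l) *
      (HTaux.bval r1 (ω i) * HTaux.bval r1 (ω k) * HTaux.bval r1 (ω l))) = 0 := by
    rw [HTaux.EE_sum]
    refine Finset.sum_eq_zero fun i _ => ?_
    rw [HTaux.EE_sum]
    refine Finset.sum_eq_zero fun k _ => ?_
    rw [HTaux.EE_sum]
    refine Finset.sum_eq_zero fun l _ => ?_
    rw [HTaux.EE_mul_left]
    by_cases hkl : k = l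
    · subst hkl; rw [hγ]; simp
    · rw [HTaux.EE_triple i k l hkl, mul_zero]
  -- third piece
  have hite : ∀ (p q : Prop) [Decidable p] [Decidable q] (c : ℝ),
      (if p ∧ q then c else 0) = if q then if p then c else 0 else 0 := by
    intro p q _ _ c
    by_cases hp : p <;> by_cases hq : q <;> simp [hp, hq]
  have hite' : ∀ (p q : Prop) [Decidable p] [Decidable q] (c : ℝ),
      (if p ∧ q then c else 0) = if p then if q then c else 0 else 0 := by
    intro p q _ _ c
    by_cases hp : p <;> by_cases hq : q <;> simp [hp, hq]
  have hE3 : HTaux.EE r1 (fun ω => ∑ i, ∑ k, ∑ j, ∑ l, (γ i j * γ k l) *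
      (HTaux.bval r1 (ω i) * HTaux.bval r1 (ω j) *
        (HTaux.bval r1 (ω k) * HTaux.bval r1 (ω l))))
      = (r1 * (1 - r1)) ^ 2 *
          ((∑ i, ∑ j, γ i j * γ i j) + ∑ i, ∑ j, γ i j * γ j i) := by
    have push : HTaux.EE r1 (fun ω => ∑ i, ∑ k, ∑ j, ∑ l, (γ i j * γ k l) *
        (HTaux.bval r1 (ω i) * HTaux.bval r1 (ω j) *
          (HTaux.bval r1 (ω k) * HTaux.bval r1 (ω l))))
        = ∑ i, ∑ j, ∑ k, ∑ l, (γ i j * γ k l) *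
            ((if j = l then if i = k then (r1 * (1 - r1)) ^ 2 else 0 else 0) +
             (if i = l then if j = k then (r1 * (1 - r1)) ^ 2 else 0 else 0)) := by
      rw [HTaux.EE_sum]
      refine Finset.sum_congr rfl fun i _ => ?_
      rw [HTaux.EE_sum]
      refine Eq.trans ?_ Finset.sum_comm
      refine Finset.sum_congr rfl fun k _ => ?_
      rw [HTaux.EE_sum]
      refine Finset.sum_congr rfl fun j _ => ?_
      rw [HTaux.EE_sum]
      refine Finset.sum_congr rfl fun l _ => ?_
      rw [HTaux.EE_mul_left]
      by_cases hij : i = j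
      · subst hij; rw [hγ]; simp
      · by_cases hkl : k = l
        · subst hkl; rw [hγ]; simp
        · rw [HTaux.EE_quad i j k l hij hkl, hite (i = k) (j = l), hite' (i = l) (j = k)]
    rw [push]
    simp only [mul_add, mul_ite, mul_zero, Finset.sum_add_distrib, Finset.sum_ite_eq,
      Finset.mem_univ, if_true]
    congr 1 <;>
      rw [Finset.mul_sum] <;>
      refine Finset.sum_congr rfl fun i _ => ?_ <;>
      rw [Finset.mul_sum] <;>
      exact Finset.sum_congr rfl fun j _ => by ring
  rw [hE1, hE2, hE3]
  -- rewrite the target sums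
  have hRHS1 : ∑ i, ((1 - r1) * condMeanOutcome α θ γ r1 i 1 +
      r1 * condMeanOutcome α θ γ r1 i 0) ^ 2 = ∑ i, av i ^ 2 := by
    refine Finset.sum_congr rfl fun i _ => ?_
    rw [hav]
    simp only [condMeanOutcome, HTaux.avec]
    ring
  have hRHS2 : (∑ i, ∑ j, (if i ≠ j then (γ i j) ^ 2 else 0))
      = ∑ i, ∑ j, γ i j * γ i j := by
    refine Finset.sum_congr rfl fun i _ => Finset.sum_congr rfl fun j _ => ?_
    by_cases hij : i = j
    · subst hij; simp [hγ]
    · simp [hij]; ring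
  have hRHS3 : (∑ i, ∑ j, (if i ≠ j then γ i j * γ j i else 0))
      = ∑ i, ∑ j, γ i j * γ j i := by
    refine Finset.sum_congr rfl fun i _ => Finset.sum_congr rfl fun j _ => ?_
    by_cases hij : i = j
    · subst hij; simp [hγ]
    · simp [hij]
  rw [hRHS1, hRHS2, hRHS3, hc0]
  field_simp
  ring
end

section
/- Let Z_1,...,Z_N be i.i.d. Bernoulli(r_1), r_0 = 1 − r_1, and Y_i = α_i + θ_i Z_i + Σ_j γ̃_{ij} Z_j with γ̃_{ii} = 0. Let E be an N×N 0-1 matrix with zero diagonal. Then the estimator τ̂ = (1/N) Σ_{i,j} E_{ij} [Y_i Z_j / r_1 − Y_i(1−Z_j)/r_0] satisfies E[τ̂] = (1/N) Σ_{i,j} E_{ij} γ̃_{ij}. In particular, if γ̃_{ij} = 0 whenever E_{ij} = 0, then E[τ̂] = (1/N) Σ_{i,j} γ̃_{ij}. -/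
open MeasureTheory ProbabilityTheory

section helpers

variable {N : ℕ} {r1 : ℝ}

lemma bv_prob (h : ENNReal.ofReal r1 ≤ 1) :
    IsProbabilityMeasure (bernoulliVec N r1 h) := by
  unfold bernoulliVec; infer_instance

lemma bv_singleton (hr0 : 0 ≤ r1) (h : ENNReal.ofReal r1 ≤ 1)
    (ω : Fin N → Bool) :
    ((bernoulliVec N r1 h) {ω}).toReal = ∏ i, (if ω i then r1 else 1 - r1) := by
  have hset : ({ω} : Set (Fin N → Bool)) = Set.pi Set.univ (fun i => {ω i}) := by
    ext x; simp [Set.mem_pi, funext_iff]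
  rw [bernoulliVec, hset, Measure.pi_pi, ENNReal.toReal_prod]
  refine Finset.prod_congr rfl fun i _ => ?_
  rw [PMF.toMeasure_apply_singleton _ _ (measurableSet_singleton _), PMF.bernoulli_apply]
  cases hwi : ω i
  · simp only [Bool.cond_false, if_neg Bool.false_ne_true]
    rw [ENNReal.coe_toReal, NNReal.coe_sub (ENNReal.coe_le_one_iff.mp h), Real.coe_toNNReal _ hr0, NNReal.coe_one]
  · simp [ENNReal.toReal_ofReal hr0, hr0]

lemma sum_pi_prod (g : Fin N → Bool → ℝ) :
    ∑ ω : Fin N → Bool, ∏ i, g i (ω i) = ∏ i, (g i false + g i true) := by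
  classical
  have := Finset.sum_prod_piFinset (Finset.univ : Finset Bool) g
  simp only [Fintype.piFinset_univ] at this
  simpa [Fintype.piFinset_univ, Fintype.sum_bool, add_comm] using this

lemma integral_prod_eq (hr0 : 0 ≤ r1) (h : ENNReal.ofReal r1 ≤ 1) (g : Fin N → Bool → ℝ) :
    ∫ ω, ∏ i, g i (ω i) ∂(bernoulliVec N r1 h)
      = ∏ i, ((1 - r1) * g i false + r1 * g i true) := by
  haveI := bv_prob (N := N) h
  rw [integral_fintype .of_finite]
  calc ∑ ω, ((bernoulliVec N r1 h) {ω}).toReal • ∏ i, g i (ω i)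
      = ∑ ω : Fin N → Bool, ∏ i, ((if ω i then r1 else 1 - r1) * g i (ω i)) := by
        refine Finset.sum_congr rfl fun ω _ => ?_
        rw [bv_singleton hr0 h ω, smul_eq_mul, ← Finset.prod_mul_distrib]
    _ = ∏ i, ((1 - r1) * g i false + r1 * g i true) := by
        rw [sum_pi_prod (fun i b => (if b then r1 else 1 - r1) * g i b)]
        simp

lemma int_coin (hr0 : 0 ≤ r1) (h : ENNReal.ofReal r1 ≤ 1) (j : Fin N) :
    ∫ ω, coin j ω ∂(bernoulliVec N r1 h) = r1 := by
  have hrw : (fun ω : Fin N → Bool => coin j ω)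
      = fun ω => ∏ i, (if i = j then (if ω i then (1:ℝ) else 0) else 1) := by
    funext ω
    rw [Finset.prod_ite_eq' Finset.univ j (fun i => if ω i then (1:ℝ) else 0)]
    simp [coin]
  rw [hrw, integral_prod_eq hr0 h (fun i b => if i = j then (if b then (1:ℝ) else 0) else 1)]
  rw [Finset.prod_eq_single j (fun i _ hij => by simp [hij]) (by simp)]
  simp

lemma int_coin_mul (hr0 : 0 ≤ r1) (h : ENNReal.ofReal r1 ≤ 1) (k j : Fin N) :
    ∫ ω, coin k ω * coin j ω ∂(bernoulliVec N r1 h)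
      = if k = j then r1 else r1 * r1 := by
  by_cases hkj : k = j
  · subst hkj
    have : (fun ω : Fin N → Bool => coin k ω * coin k ω) = fun ω => coin k ω := by
      funext ω; unfold coin; by_cases hb : ω k <;> simp [hb]
    rw [this, int_coin hr0 h k]
    simp
  · rw [if_neg hkj]
    have hrw : (fun ω : Fin N → Bool => coin k ω * coin j ω)
        = fun ω => ∏ i, ((if i = k then (if ω i then (1:ℝ) else 0) else 1)
            * (if i = j then (if ω i then (1:ℝ) else 0) else 1)) := by
      funext ω
      rw [Finset.prod_mul_distrib,
        Finset.prod_ite_eq' Finset.univ k (fun i => if ω i then (1:ℝ) else 0),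
        Finset.prod_ite_eq' Finset.univ j (fun i => if ω i then (1:ℝ) else 0)]
      simp [coin]
    rw [hrw, integral_prod_eq hr0 h (fun i b => (if i = k then (if b then (1:ℝ) else 0) else 1)
            * (if i = j then (if b then (1:ℝ) else 0) else 1))]
    have : ∀ i : Fin N, (1 - r1) * ((if i = k then (if false then (1:ℝ) else 0) else 1)
            * (if i = j then (if false then (1:ℝ) else 0) else 1))
          + r1 * ((if i = k then (if true then (1:ℝ) else 0) else 1)
            * (if i = j then (if true then (1:ℝ) else 0) else 1))
        = (if i = k then r1 else 1) * (if i = j then r1 else 1) := by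
      intro i
      by_cases hik : i = k <;> by_cases hij : i = j <;> simp_all
    rw [Finset.prod_congr rfl (fun i _ => this i), Finset.prod_mul_distrib,
      Finset.prod_ite_eq' Finset.univ k (fun _ => r1),
      Finset.prod_ite_eq' Finset.univ j (fun _ => r1)]
    simp

variable (α θ : Fin N → ℝ) (γ : Fin N → Fin N → ℝ)

lemma int_outcome (hr0 : 0 ≤ r1) (h : ENNReal.ofReal r1 ≤ 1) (i : Fin N) :
    ∫ ω, outcome α θ γ i ω ∂(bernoulliVec N r1 h)
      = α i + θ i * r1 + (∑ k, γ i k) * r1 := by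
  haveI := bv_prob (N := N) h
  unfold outcome
  rw [integral_add (by exact .of_finite) (by exact .of_finite),
    integral_add (by exact .of_finite) (by exact .of_finite),
    integral_const, integral_const_mul, int_coin hr0 h,
    integral_finset_sum _ (fun k _ => .of_finite)]
  simp only [integral_const_mul, int_coin hr0 h]
  simp [Finset.sum_mul]

lemma int_outcome_coin (hr0 : 0 ≤ r1) (h : ENNReal.ofReal r1 ≤ 1) (i j : Fin N) :
    ∫ ω, outcome α θ γ i ω * coin j ω ∂(bernoulliVec N r1 h)
      = α i * r1 + θ i * (if i = j then r1 else r1 * r1)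
        + ∑ k, γ i k * (if k = j then r1 else r1 * r1) := by
  haveI := bv_prob (N := N) h
  have hrw : (fun ω : Fin N → Bool => outcome α θ γ i ω * coin j ω)
      = fun ω => α i * coin j ω + θ i * (coin i ω * coin j ω)
          + ∑ k, γ i k * (coin k ω * coin j ω) := by
    funext ω
    simp only [outcome, add_mul, Finset.sum_mul, mul_assoc]
  rw [hrw, integral_add (by exact .of_finite) (by exact .of_finite),
    integral_add (by exact .of_finite) (by exact .of_finite),
    integral_const_mul, integral_const_mul, int_coin hr0 h, int_coin_mul hr0 h,
    integral_finset_sum _ (fun k _ => .of_finite)]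
  simp only [integral_const_mul, int_coin_mul hr0 h]

lemma int_term (hr0 : 0 < r1) (hr1 : r1 < 1) (h : ENNReal.ofReal r1 ≤ 1)
    (i j : Fin N) (hij : i ≠ j) :
    ∫ ω, (outcome α θ γ i ω * coin j ω / r1 -
        outcome α θ γ i ω * (1 - coin j ω) / (1 - r1)) ∂(bernoulliVec N r1 h)
      = γ i j := by
  haveI := bv_prob (N := N) h
  rw [integral_sub (by exact .of_finite) (by exact .of_finite), integral_div, integral_div]
  have hone : (fun ω : Fin N → Bool => outcome α θ γ i ω * (1 - coin j ω))
      = fun ω => outcome α θ γ i ω - outcome α θ γ i ω * coin j ω := by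
    funext ω; ring
  rw [hone, integral_sub (by exact .of_finite) (by exact .of_finite),
    int_outcome α θ γ hr0.le h i, int_outcome_coin α θ γ hr0.le h i j]
  have hsum : ∑ k, γ i k * (if k = j then r1 else r1 * r1)
      = (∑ k, γ i k) * (r1 * r1) + γ i j * (r1 - r1 * r1) := by
    have hterm : ∀ k ∈ Finset.univ, γ i k * (if k = j then r1 else r1 * r1)
        = γ i k * (r1 * r1) + (if k = j then γ i j * (r1 - r1 * r1) else 0) := by
      intro k _
      by_cases hk : k = j
      · subst hk; simp; ring
      · simp [hk]
    rw [Finset.sum_congr rfl hterm, Finset.sum_add_distrib,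
      Finset.sum_ite_eq' Finset.univ j (fun _ => γ i j * (r1 - r1 * r1))]
    simp [← Finset.sum_mul]
  rw [if_neg hij, hsum]
  have h1 : r1 ≠ 0 := hr0.ne'
  have h2 : (1:ℝ) - r1 ≠ 0 := (by linarith : (0:ℝ) < 1 - r1).ne'
  field_simp
  ring

end helpers

/-- Unbiasedness of the Horvitz–Thompson estimator of the indirect average treatment effect:
`E[(1/N) ∑_{i,j} E_{ij}(Y_i Z_j/r₁ − Y_i(1−Z_j)/r₀)] = (1/N) ∑_{i,j} E_{ij} γ̃_{ij}`; in
particular, if `γ̃_{ij} = 0` whenever `E_{ij} = 0`, the expectation is `(1/N) ∑_{i,j} γ̃_{ij}`. -/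
theorem horvitzThompson_indirect_unbiased
    (N : ℕ) (hN : 1 ≤ N) (r1 : ℝ) (hr0 : 0 < r1) (hr1 : r1 < 1)
    (α θ : Fin N → ℝ) (γ : Fin N → Fin N → ℝ) (hγ : ∀ i, γ i i = 0)
    (E : Fin N → Fin N → ℝ) (hE01 : ∀ i j, E i j = 0 ∨ E i j = 1)
    (hEdiag : ∀ i, E i i = 0) :
    (∫ ω, ((N : ℝ)⁻¹ * ∑ i, ∑ j, E i j *
          (outcome α θ γ i ω * coin j ω / r1 -
           outcome α θ γ i ω * (1 - coin j ω) / (1 - r1)))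
        ∂(bernoulliVec N r1 (ENNReal.ofReal_le_one.mpr hr1.le))
      = (N : ℝ)⁻¹ * ∑ i, ∑ j, E i j * γ i j)
    ∧ ((∀ i j, E i j = 0 → γ i j = 0) →
      (∫ ω, ((N : ℝ)⁻¹ * ∑ i, ∑ j, E i j *
            (outcome α θ γ i ω * coin j ω / r1 -
             outcome α θ γ i ω * (1 - coin j ω) / (1 - r1)))
          ∂(bernoulliVec N r1 (ENNReal.ofReal_le_one.mpr hr1.le))
        = (N : ℝ)⁻¹ * ∑ i, ∑ j, γ i j)) := by
  set h := ENNReal.ofReal_le_one.mpr hr1.le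
  haveI := bv_prob (N := N) h
  have key : (∫ ω, ((N : ℝ)⁻¹ * ∑ i, ∑ j, E i j *
          (outcome α θ γ i ω * coin j ω / r1 -
           outcome α θ γ i ω * (1 - coin j ω) / (1 - r1)))
        ∂(bernoulliVec N r1 h))
      = (N : ℝ)⁻¹ * ∑ i, ∑ j, E i j * γ i j := by
    rw [integral_const_mul, integral_finset_sum _ (fun i _ => .of_finite)]
    congr 1
    refine Finset.sum_congr rfl fun i _ => ?_
    rw [integral_finset_sum _ (fun j _ => .of_finite)]
    refine Finset.sum_congr rfl fun j _ => ?_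
    rw [integral_const_mul]
    by_cases hij : i = j
    · subst hij
      rw [hEdiag i]
      simp
    · rw [int_term α θ γ hr0 hr1 h i j hij]
  refine ⟨key, fun hzero => ?_⟩
  rw [key]
  congr 1
  refine Finset.sum_congr rfl fun i _ => Finset.sum_congr rfl fun j _ => ?_
  rcases hE01 i j with hE | hE
  · rw [hE, hzero i j hE, mul_zero]
  · rw [hE, one_mul]
end

section
/- Let Z_1,...,Z_N be i.i.d. Bernoulli(r_1), r_0 = 1 − r_1, and Y_i = α_i + θ_i Z_i + Σ_j γ̃_{ij} Z_j with γ̃_{ii} = 0. Define V̂ = (1/N²) Σ_i [Z_i Y_i²/r_1² + (1−Z_i) Y_i²/r_0²] and τ̂_DIR = (1/N) Σ_i [Y_i Z_i/r_1 − Y_i(1−Z_i)/r_0]. Then E[V̂] − Var(τ̂_DIR) = (1/N²) Σ_i θ_i² − (1/N²) Σ_{i,j} γ̃_{ij} γ̃_{ji}; consequently E[2V̂] ≥ Var(τ̂_DIR). -/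
open MeasureTheory ProbabilityTheory

/-- The Horvitz–Thompson estimator of the direct average treatment effect. -/
noncomputable def tauDir {N : ℕ} (α θ : Fin N → ℝ) (γ : Fin N → Fin N → ℝ) (r1 : ℝ)
    (ω : Fin N → Bool) : ℝ :=
  (N : ℝ)⁻¹ * ∑ i, (outcome α θ γ i ω * coin i ω / r1 -
    outcome α θ γ i ω * (1 - coin i ω) / (1 - r1))

/-- The variance estimator `V̂ = (1/N²) ∑_i [Z_i Y_i²/r₁² + (1−Z_i) Y_i²/r₀²]`. -/
noncomputable def varEst {N : ℕ} (α θ : Fin N → ℝ) (γ : Fin N → Fin N → ℝ) (r1 : ℝ)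
    (ω : Fin N → Bool) : ℝ :=
  (1 / (N : ℝ) ^ 2) * ∑ i,
    (coin i ω * outcome α θ γ i ω ^ 2 / r1 ^ 2 +
     (1 - coin i ω) * outcome α θ γ i ω ^ 2 / (1 - r1) ^ 2)

namespace HATEaux
open Finset

variable {N : ℕ}

noncomputable def p (r1 : ℝ) (b : Bool) : ℝ := if b then r1 else 1 - r1
noncomputable def w (N : ℕ) (r1 : ℝ) (ω : Fin N → Bool) : ℝ := ∏ i, p r1 (ω i)

instance (N : ℕ) (r : ℝ) (h : ENNReal.ofReal r ≤ 1) :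
    IsProbabilityMeasure (bernoulliVec N r h) := by
  unfold bernoulliVec; infer_instance

lemma integral_eq_sum {r1 : ℝ} (hr0 : 0 ≤ r1) (hr1 : r1 ≤ 1)
    (h : ENNReal.ofReal r1 ≤ 1) (f : (Fin N → Bool) → ℝ) :
    ∫ ω, f ω ∂(bernoulliVec N r1 h) = ∑ ω, w N r1 ω * f ω := by
  rw [integral_fintype Integrable.of_finite]
  refine Finset.sum_congr rfl fun ω _ => ?_
  have hμ : (bernoulliVec N r1 h) {ω}
      = ∏ i, ((PMF.bernoulli (Real.toNNReal r1) (ENNReal.coe_le_one_iff.mp h)).toMeasure {ω i}) := by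
    rw [bernoulliVec, ← Set.univ_pi_singleton ω, Measure.pi_pi]
  have hone : (1 : ENNReal) - ENNReal.ofReal r1 = ENNReal.ofReal (1 - r1) := by
    rw [ENNReal.ofReal_sub _ hr0, ENNReal.ofReal_one]
  have hone' : (1 - ((r1.toNNReal : NNReal) : ENNReal)).toReal = 1 - r1 := by
    rw [← ENNReal.coe_one, ← ENNReal.coe_sub, ENNReal.coe_toReal, NNReal.coe_sub (Real.toNNReal_le_one.mpr hr1), NNReal.coe_one, Real.coe_toNNReal _ hr0]
  rw [smul_eq_mul, Measure.real, hμ, ENNReal.toReal_prod]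
  congr 1
  refine Finset.prod_congr rfl fun i _ => ?_
  rw [PMF.toMeasure_apply_singleton _ _ (measurableSet_singleton _), PMF.bernoulli_apply]
  cases hb : ω i <;> simp [p, hone, hone', Real.coe_toNNReal _ hr0, ENNReal.toReal_ofReal, hr0, sub_nonneg.mpr hr1]

lemma sum_pair (i : Fin N) (G : (Fin N → Bool) → ℝ) :
    ∑ ω, G ω = ∑ ω, (if ω i then G ω + G (Function.update ω i false) else 0) := by
  have h1 : ∀ ω : Fin N → Bool, G ω =
      (if ω i then G ω else 0) + (if ω i then 0 else G ω) := by
    intro ω; cases hb : ω i <;> simp [hb]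
  rw [Finset.sum_congr rfl fun ω _ => h1 ω, Finset.sum_add_distrib]
  have hinv : Function.Involutive
      (fun ω : Fin N → Bool => Function.update ω i (!(ω i))) := by
    intro ω; funext j
    by_cases hj : j = i
    · subst hj; simp [Function.update_apply]
    · simp [Function.update_apply, hj]
  have h2 : ∑ ω : Fin N → Bool, (if ω i then 0 else G ω)
      = ∑ ω : Fin N → Bool, (if ω i then G (Function.update ω i false) else 0) := by
    refine Fintype.sum_equiv (Function.Involutive.toPerm _ hinv) _ _ fun ω => ?_
    have hσ : (Function.Involutive.toPerm _ hinv) ω = Function.update ω i (!(ω i)) := rfl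
    rw [hσ]
    cases hb : ω i
    · have hu : Function.update ω i false = ω := by
        funext j; by_cases hj : j = i
        · subst hj; simp [hb]
        · simp [Function.update_apply, hj]
      simp [hb, hu]
    · simp [hb]
  rw [h2, ← Finset.sum_add_distrib]
  refine Finset.sum_congr rfl fun ω _ => ?_
  cases hb : ω i <;> simp [hb]

lemma w_update (r1 : ℝ) (ω : Fin N → Bool) (i : Fin N) (b : Bool) :
    w N r1 (Function.update ω i b) = p r1 b * ∏ j ∈ univ.erase i, p r1 (ω j) := by
  rw [w, ← Finset.mul_prod_erase _ _ (Finset.mem_univ i)]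
  simp only [Function.update_self]
  congr 1
  refine Finset.prod_congr rfl fun j hj => ?_
  rw [Function.update_of_ne (Finset.ne_of_mem_erase hj)]

lemma update_update (ω : Fin N → Bool) (i : Fin N) (b b' : Bool) :
    Function.update (Function.update ω i b) i b' = Function.update ω i b' := by
  funext j; by_cases hj : j = i
  · subst hj; simp
  · simp [Function.update_apply, hj]

lemma cond_lemma (r1 : ℝ) (i : Fin N) (f : (Fin N → Bool) → ℝ) :
    ∑ ω, w N r1 ω * f ω =
    ∑ ω, w N r1 ω * (r1 * f (Function.update ω i true)
      + (1 - r1) * f (Function.update ω i false)) := by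
  rw [sum_pair i (fun ω => w N r1 ω * f ω),
      sum_pair i (fun ω => w N r1 ω * (r1 * f (Function.update ω i true)
        + (1 - r1) * f (Function.update ω i false)))]
  refine Finset.sum_congr rfl fun ω _ => ?_
  cases hb : ω i
  · simp [hb]
  · simp only [hb, if_true]
    have hωT : Function.update ω i true = ω := by
      funext j; by_cases hj : j = i
      · subst hj; simp [hb]
      · simp [Function.update_apply, hj]
    have hwT := w_update (N := N) r1 ω i true
    have hwF := w_update (N := N) r1 ω i false
    rw [← hωT, update_update, update_update, update_update, update_update, hwT, hwF]
    simp only [p]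
    norm_num
    ring

/-- value of a Bool as a real -/
def bv (b : Bool) : ℝ := if b then 1 else 0

noncomputable def Tf (α θ : Fin N → ℝ) (γ : Fin N → Fin N → ℝ) (r1 : ℝ)
    (i : Fin N) (ω : Fin N → Bool) : ℝ :=
  outcome α θ γ i ω * (coin i ω / r1 - (1 - coin i ω) / (1 - r1))

lemma coin_update (k i : Fin N) (ω : Fin N → Bool) (b : Bool) :
    coin k (Function.update ω i b) = if k = i then bv b else coin k ω := by
  by_cases hk : k = i
  · subst hk; simp [coin, bv]
  · simp [coin, Function.update_apply, hk]

lemma G_update (γ : Fin N → Fin N → ℝ) (l i : Fin N) (ω : Fin N → Bool) (b : Bool) :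
    ∑ k, γ l k * coin k (Function.update ω i b)
      = (∑ k, γ l k * coin k ω) + γ l i * (bv b - coin i ω) := by
  have h : ∀ k : Fin N, γ l k * coin k (Function.update ω i b)
      = γ l k * coin k ω + (if k = i then γ l i * (bv b - coin i ω) else 0) := by
    intro k
    rw [coin_update]
    by_cases hk : k = i
    · subst hk; simp; ring
    · simp [hk]
  rw [Finset.sum_congr rfl fun k _ => h k, Finset.sum_add_distrib,
    Finset.sum_ite_eq' Finset.univ i (fun _ => γ l i * (bv b - coin i ω))]
  simp

lemma out_update {α θ : Fin N → ℝ} {γ : Fin N → Fin N → ℝ}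
    (j i : Fin N) (ω : Fin N → Bool) (b : Bool) :
    outcome α θ γ j (Function.update ω i b)
      = outcome α θ γ j ω
        + ((if j = i then θ j else 0) + γ j i) * (bv b - coin i ω) := by
  unfold outcome
  rw [G_update, coin_update]
  by_cases hj : j = i
  · subst hj; simp; ring
  · simp [hj]; ring

lemma out_self_update {α θ : Fin N → ℝ} {γ : Fin N → Fin N → ℝ}
    (hγ : ∀ i, γ i i = 0) (i : Fin N) (ω : Fin N → Bool) (b : Bool) :
    outcome α θ γ i (Function.update ω i b)
      = α i + θ i * bv b + ∑ k, γ i k * coin k ω := by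
  rw [out_update]
  unfold outcome
  simp [hγ i]
  ring

variable {r1 : ℝ} {α θ : Fin N → ℝ} {γ : Fin N → Fin N → ℝ}

lemma sum_w (hr0 : 0 < r1) (hr1 : r1 < 1) : ∑ ω : Fin N → Bool, w N r1 ω = 1 := by
  have h : ENNReal.ofReal r1 ≤ 1 := ENNReal.ofReal_le_one.mpr hr1.le
  have h2 := integral_eq_sum (N := N) hr0.le hr1.le h (fun _ => (1:ℝ))
  simpa using h2.symm

lemma E_const (hr0 : 0 < r1) (hr1 : r1 < 1) (c : ℝ) :
    ∑ ω : Fin N → Bool, w N r1 ω * c = c := by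
  rw [← Finset.sum_mul, sum_w hr0 hr1, one_mul]

lemma E_smul (c : ℝ) (f : (Fin N → Bool) → ℝ) :
    ∑ ω : Fin N → Bool, w N r1 ω * (c * f ω) = c * ∑ ω, w N r1 ω * f ω := by
  rw [Finset.mul_sum]; exact Finset.sum_congr rfl fun ω _ => by ring

lemma E_coin (hr0 : 0 < r1) (hr1 : r1 < 1) (k : Fin N) :
    ∑ ω : Fin N → Bool, w N r1 ω * coin k ω = r1 := by
  rw [cond_lemma r1 k]
  have h : ∀ ω : Fin N → Bool,
      r1 * coin k (Function.update ω k true) + (1 - r1) * coin k (Function.update ω k false)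
        = r1 := by
    intro ω; rw [coin_update, coin_update]; simp [bv]
  rw [Finset.sum_congr rfl fun ω _ => by rw [h ω]]
  exact E_const hr0 hr1 r1

lemma E_coin2 (hr0 : 0 < r1) (hr1 : r1 < 1) {k l : Fin N} (hkl : k ≠ l) :
    ∑ ω : Fin N → Bool, w N r1 ω * (coin k ω * coin l ω) = r1 ^ 2 := by
  rw [cond_lemma r1 k]
  have h : ∀ ω : Fin N → Bool,
      r1 * ((fun ω => coin k ω * coin l ω) (Function.update ω k true))
        + (1 - r1) * ((fun ω => coin k ω * coin l ω) (Function.update ω k false))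
        = r1 * coin l ω := by
    intro ω
    simp only []
    rw [coin_update, coin_update, coin_update, coin_update]
    simp [hkl.symm, bv]
  rw [Finset.sum_congr rfl fun ω _ => by rw [h ω]]
  rw [Finset.sum_congr rfl fun ω _ => (rfl : w N r1 ω * (r1 * coin l ω)
    = w N r1 ω * (r1 * coin l ω)), E_smul, E_coin hr0 hr1 l]
  ring

lemma Tf_self_update (hγ : ∀ i, γ i i = 0) (i : Fin N) (ω : Fin N → Bool) (b : Bool) :
    Tf α θ γ r1 i (Function.update ω i b)
      = (α i + θ i * bv b + ∑ k, γ i k * coin k ω)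
        * (bv b / r1 - (1 - bv b) / (1 - r1)) := by
  unfold Tf
  rw [out_self_update hγ, coin_update]
  simp

lemma E_T (hr0 : 0 < r1) (hr1 : r1 < 1) (hγ : ∀ i, γ i i = 0) (i : Fin N) :
    ∑ ω : Fin N → Bool, w N r1 ω * Tf α θ γ r1 i ω = θ i := by
  rw [cond_lemma r1 i]
  have h : ∀ ω : Fin N → Bool,
      r1 * Tf α θ γ r1 i (Function.update ω i true)
        + (1 - r1) * Tf α θ γ r1 i (Function.update ω i false) = θ i := by
    intro ω
    rw [Tf_self_update hγ, Tf_self_update hγ]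
    simp only [bv, if_true, if_false, Bool.false_eq_true]
    have h1 : r1 ≠ 0 := hr0.ne'
    have h2 : 1 - r1 ≠ 0 := by linarith
    field_simp
    ring
  rw [Finset.sum_congr rfl fun ω _ => by rw [h ω]]
  exact E_const hr0 hr1 _

lemma cond_lemma2 (r1 : ℝ) (i j : Fin N) (f : (Fin N → Bool) → ℝ) :
    ∑ ω, w N r1 ω * f ω = ∑ ω, w N r1 ω *
      (r1 * (r1 * f (Function.update (Function.update ω j true) i true)
          + (1 - r1) * f (Function.update (Function.update ω j true) i false))
        + (1 - r1) * (r1 * f (Function.update (Function.update ω j false) i true)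
          + (1 - r1) * f (Function.update (Function.update ω j false) i false))) := by
  rw [cond_lemma r1 i f]
  exact cond_lemma r1 j (fun ω => r1 * f (Function.update ω i true)
    + (1 - r1) * f (Function.update ω i false))

lemma Tf_update2_i (hγ : ∀ i, γ i i = 0) {i j : Fin N} (hij : i ≠ j)
    (ω : Fin N → Bool) (b b' : Bool) :
    Tf α θ γ r1 i (Function.update (Function.update ω j b') i b)
      = (α i + θ i * bv b + γ i j * (bv b' - coin j ω) + ∑ k, γ i k * coin k ω)
        * (bv b / r1 - (1 - bv b) / (1 - r1)) := by
  unfold Tf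
  rw [out_self_update hγ, coin_update, G_update]
  simp only [if_pos rfl, if_true]
  ring

lemma Tf_update2_j (hγ : ∀ i, γ i i = 0) {i j : Fin N} (hij : i ≠ j)
    (ω : Fin N → Bool) (b b' : Bool) :
    Tf α θ γ r1 j (Function.update (Function.update ω j b') i b)
      = (α j + θ j * bv b' + γ j i * (bv b - coin i ω) + ∑ k, γ j k * coin k ω)
        * (bv b' / r1 - (1 - bv b') / (1 - r1)) := by
  unfold Tf
  rw [out_update, coin_update, coin_update, out_self_update hγ, coin_update]
  simp only [if_neg hij.symm, if_neg hij, if_pos rfl, if_true]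
  ring

lemma E_TT (hr0 : 0 < r1) (hr1 : r1 < 1) (hγ : ∀ i, γ i i = 0)
    {i j : Fin N} (hij : i ≠ j) :
    ∑ ω : Fin N → Bool, w N r1 ω * (Tf α θ γ r1 i ω * Tf α θ γ r1 j ω)
      = θ i * θ j + γ i j * γ j i := by
  rw [cond_lemma2 r1 i j (fun ω => Tf α θ γ r1 i ω * Tf α θ γ r1 j ω)]
  have h : ∀ ω : Fin N → Bool,
      (r1 * (r1 * ((fun ω => Tf α θ γ r1 i ω * Tf α θ γ r1 j ω)
            (Function.update (Function.update ω j true) i true))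
          + (1 - r1) * ((fun ω => Tf α θ γ r1 i ω * Tf α θ γ r1 j ω)
            (Function.update (Function.update ω j true) i false)))
        + (1 - r1) * (r1 * ((fun ω => Tf α θ γ r1 i ω * Tf α θ γ r1 j ω)
            (Function.update (Function.update ω j false) i true))
          + (1 - r1) * ((fun ω => Tf α θ γ r1 i ω * Tf α θ γ r1 j ω)
            (Function.update (Function.update ω j false) i false))))
      = θ i * θ j + γ i j * γ j i := by
    intro ω
    simp only [Tf_update2_i hγ hij, Tf_update2_j hγ hij]
    simp only [bv, if_true, if_false, Bool.false_eq_true]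
    have h1 : r1 ≠ 0 := hr0.ne'
    have h2 : 1 - r1 ≠ 0 := by linarith
    field_simp
    ring
  rw [Finset.sum_congr rfl fun ω _ => by rw [h ω]]
  exact E_const hr0 hr1 _

lemma E_G (hr0 : 0 < r1) (hr1 : r1 < 1) (i : Fin N) :
    ∑ ω : Fin N → Bool, w N r1 ω * (∑ k, γ i k * coin k ω)
      = r1 * ∑ k, γ i k := by
  have h : ∀ ω : Fin N → Bool, w N r1 ω * (∑ k, γ i k * coin k ω)
      = ∑ k, γ i k * (w N r1 ω * coin k ω) := by
    intro ω; rw [Finset.mul_sum]; exact Finset.sum_congr rfl fun k _ => by ring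
  rw [Finset.sum_congr rfl fun ω _ => h ω, Finset.sum_comm]
  rw [Finset.sum_congr rfl fun k _ => by
    rw [← Finset.mul_sum, E_coin hr0 hr1 k]]
  rw [Finset.mul_sum]
  exact Finset.sum_congr rfl fun k _ => by ring

lemma E_G2 (hr0 : 0 < r1) (hr1 : r1 < 1) (i : Fin N) :
    ∑ ω : Fin N → Bool, w N r1 ω * (∑ k, γ i k * coin k ω) ^ 2
      = r1 ^ 2 * (∑ k, γ i k) ^ 2 + (r1 - r1 ^ 2) * ∑ k, (γ i k) ^ 2 := by
  have hpt : ∀ ω : Fin N → Bool, w N r1 ω * (∑ k, γ i k * coin k ω) ^ 2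
      = ∑ k, ∑ l, γ i k * γ i l * (w N r1 ω * (coin k ω * coin l ω)) := by
    intro ω
    rw [sq, Finset.sum_mul_sum]
    rw [Finset.mul_sum]
    refine Finset.sum_congr rfl fun k _ => ?_
    rw [Finset.mul_sum]
    exact Finset.sum_congr rfl fun l _ => by ring
  rw [Finset.sum_congr rfl fun ω _ => hpt ω, Finset.sum_comm]
  have hinner : ∀ k : Fin N, (∑ ω : Fin N → Bool, ∑ l, γ i k * γ i l *
      (w N r1 ω * (coin k ω * coin l ω)))
      = r1 ^ 2 * (γ i k * ∑ l, γ i l) + (r1 - r1 ^ 2) * (γ i k) ^ 2 := by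
    intro k
    rw [Finset.sum_comm]
    have hl : ∀ l : Fin N, (∑ ω : Fin N → Bool, γ i k * γ i l *
        (w N r1 ω * (coin k ω * coin l ω)))
        = γ i k * γ i l * r1 ^ 2 + (if l = k then (γ i k) ^ 2 * (r1 - r1 ^ 2) else 0) := by
      intro l
      by_cases hlk : l = k
      · subst hlk
        have hcc : ∀ ω : Fin N → Bool, coin l ω * coin l ω = coin l ω := by
          intro ω; unfold coin; by_cases hb : ω l <;> simp [hb]
        rw [Finset.sum_congr rfl fun ω _ => by rw [hcc ω]]
        rw [← Finset.mul_sum, E_coin hr0 hr1 l]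
        simp only [if_pos rfl, if_true]; ring
      · rw [← Finset.mul_sum, E_coin2 hr0 hr1 (fun h => hlk h.symm)]
        simp [hlk]
    rw [Finset.sum_congr rfl fun l _ => hl l, Finset.sum_add_distrib,
      Finset.sum_ite_eq' Finset.univ k (fun _ => (γ i k) ^ 2 * (r1 - r1 ^ 2))]
    simp only [Finset.mem_univ, if_true]
    have hmm : ∑ l, γ i k * γ i l * r1 ^ 2 = r1 ^ 2 * (γ i k * ∑ l, γ i l) := by
      rw [Finset.mul_sum, Finset.mul_sum]
      exact Finset.sum_congr rfl fun l _ => by ring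
    rw [hmm]; ring
  rw [Finset.sum_congr rfl fun k _ => hinner k, Finset.sum_add_distrib,
    ← Finset.mul_sum, ← Finset.mul_sum, ← Finset.sum_mul, ← sq]

lemma E_aff (hr0 : 0 < r1) (hr1 : r1 < 1) (i : Fin N) (x : ℝ) :
    ∑ ω : Fin N → Bool, w N r1 ω * (x + ∑ k, γ i k * coin k ω) ^ 2
      = (x + r1 * ∑ k, γ i k) ^ 2 + (r1 - r1 ^ 2) * ∑ k, (γ i k) ^ 2 := by
  have h : ∀ ω : Fin N → Bool, w N r1 ω * (x + ∑ k, γ i k * coin k ω) ^ 2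
      = w N r1 ω * x ^ 2 + 2 * x * (w N r1 ω * (∑ k, γ i k * coin k ω))
        + w N r1 ω * (∑ k, γ i k * coin k ω) ^ 2 := by
    intro ω; ring
  rw [Finset.sum_congr rfl fun ω _ => h ω, Finset.sum_add_distrib,
    Finset.sum_add_distrib, E_const hr0 hr1, ← Finset.mul_sum, E_G hr0 hr1,
    E_G2 hr0 hr1 i]
  ring

lemma E_Tsq (hr0 : 0 < r1) (hr1 : r1 < 1) (hγ : ∀ i, γ i i = 0) (i : Fin N) :
    ∑ ω : Fin N → Bool, w N r1 ω * (Tf α θ γ r1 i ω) ^ 2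
      = (α i + θ i + r1 * ∑ k, γ i k) ^ 2 / r1
        + (α i + r1 * ∑ k, γ i k) ^ 2 / (1 - r1) + ∑ k, (γ i k) ^ 2 := by
  have h1 : r1 ≠ 0 := hr0.ne'
  have h2 : 1 - r1 ≠ 0 := by linarith
  rw [cond_lemma r1 i (fun ω => (Tf α θ γ r1 i ω) ^ 2)]
  have h : ∀ ω : Fin N → Bool,
      (r1 * ((fun ω => (Tf α θ γ r1 i ω) ^ 2) (Function.update ω i true))
        + (1 - r1) * ((fun ω => (Tf α θ γ r1 i ω) ^ 2) (Function.update ω i false)))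
      = (1 / r1) * (α i + θ i + ∑ k, γ i k * coin k ω) ^ 2
        + (1 / (1 - r1)) * (α i + ∑ k, γ i k * coin k ω) ^ 2 := by
    intro ω
    simp only [Tf_self_update hγ]
    simp only [bv, if_true, if_false, Bool.false_eq_true]
    field_simp
    ring
  rw [Finset.sum_congr rfl fun ω _ => by rw [h ω]]
  have hsplit : ∀ ω : Fin N → Bool, w N r1 ω *
      ((1 / r1) * (α i + θ i + ∑ k, γ i k * coin k ω) ^ 2
        + (1 / (1 - r1)) * (α i + ∑ k, γ i k * coin k ω) ^ 2)
      = (1 / r1) * (w N r1 ω * ((α i + θ i) + ∑ k, γ i k * coin k ω) ^ 2)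
        + (1 / (1 - r1)) * (w N r1 ω * (α i + ∑ k, γ i k * coin k ω) ^ 2) := by
    intro ω; ring
  rw [Finset.sum_congr rfl fun ω _ => hsplit ω, Finset.sum_add_distrib,
    ← Finset.mul_sum, ← Finset.mul_sum, E_aff hr0 hr1 i (α i + θ i), E_aff hr0 hr1 i (α i)]
  field_simp
  ring

lemma E_Tsq_ge (hr0 : 0 < r1) (hr1 : r1 < 1) (hγ : ∀ i, γ i i = 0) (i : Fin N) :
    ∑ k, (γ i k) ^ 2 ≤ ∑ ω : Fin N → Bool, w N r1 ω * (Tf α θ γ r1 i ω) ^ 2 := by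
  rw [E_Tsq hr0 hr1 hγ i]
  have ha : 0 ≤ (α i + θ i + r1 * ∑ k, γ i k) ^ 2 / r1 :=
    div_nonneg (sq_nonneg _) hr0.le
  have hb : 0 ≤ (α i + r1 * ∑ k, γ i k) ^ 2 / (1 - r1) :=
    div_nonneg (sq_nonneg _) (by linarith)
  linarith

lemma E_sum {M : Type*} [Fintype M] (f : M → (Fin N → Bool) → ℝ) :
    ∑ ω : Fin N → Bool, w N r1 ω * (∑ i, f i ω)
      = ∑ i, ∑ ω : Fin N → Bool, w N r1 ω * f i ω := by
  rw [Finset.sum_congr rfl fun ω _ => Finset.mul_sum Finset.univ (fun i => f i ω) (w N r1 ω)]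
  exact Finset.sum_comm


lemma tauDir_eq {N : ℕ} (α θ : Fin N → ℝ) (γ : Fin N → Fin N → ℝ) (r1 : ℝ)
    (ω : Fin N → Bool) :
    tauDir α θ γ r1 ω = (N : ℝ)⁻¹ * ∑ i, Tf α θ γ r1 i ω := by
  unfold tauDir Tf
  congr 1
  exact Finset.sum_congr rfl fun i _ => by ring

lemma varEst_eq {N : ℕ} (α θ : Fin N → ℝ) (γ : Fin N → Fin N → ℝ) {r1 : ℝ}
    (hr0 : 0 < r1) (hr1 : r1 < 1) (ω : Fin N → Bool) :
    varEst α θ γ r1 ω = (1 / (N : ℝ) ^ 2) * ∑ i, (Tf α θ γ r1 i ω) ^ 2 := by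
  have h1 : r1 ≠ 0 := hr0.ne'
  have h2 : 1 - r1 ≠ 0 := by linarith
  unfold varEst Tf
  congr 1
  refine Finset.sum_congr rfl fun i _ => ?_
  by_cases hb : ω i <;> simp only [coin, hb, if_true, if_false, Bool.false_eq_true] <;> field_simp <;> ring

end HATEaux

/-- Bias of the direct-effect variance estimator:
`E[V̂] − Var(τ̂_DIR) = (1/N²) ∑_i θ_i² − (1/N²) ∑_{i,j} γ̃_{ij} γ̃_{ji}`, and consequently
`E[2V̂] ≥ Var(τ̂_DIR)`. -/
theorem direct_variance_estimator_bias
    (N : ℕ) (hN : 1 ≤ N) (r1 : ℝ) (hr0 : 0 < r1) (hr1 : r1 < 1)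
    (α θ : Fin N → ℝ) (γ : Fin N → Fin N → ℝ) (hγ : ∀ i, γ i i = 0) :
    ((∫ ω, varEst α θ γ r1 ω
          ∂(bernoulliVec N r1 (ENNReal.ofReal_le_one.mpr hr1.le)))
        - variance (tauDir α θ γ r1)
            (bernoulliVec N r1 (ENNReal.ofReal_le_one.mpr hr1.le))
      = (1 / (N : ℝ) ^ 2) * ∑ i, (θ i) ^ 2
        - (1 / (N : ℝ) ^ 2) * ∑ i, ∑ j, γ i j * γ j i)
    ∧ variance (tauDir α θ γ r1)
          (bernoulliVec N r1 (ENNReal.ofReal_le_one.mpr hr1.le))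
        ≤ ∫ ω, 2 * varEst α θ γ r1 ω
            ∂(bernoulliVec N r1 (ENNReal.ofReal_le_one.mpr hr1.le)) := by

  classical
  set h : ENNReal.ofReal r1 ≤ 1 := ENNReal.ofReal_le_one.mpr hr1.le
  set μ := bernoulliVec N r1 h with hμ
  have hNne : (N : ℝ) ≠ 0 := by positivity
  -- abbreviations
  set A : ℝ := ∑ i, ∑ ω : Fin N → Bool, HATEaux.w N r1 ω * (HATEaux.Tf α θ γ r1 i ω) ^ 2 with hA
  set Θ : ℝ := ∑ i, (θ i) ^ 2 with hΘ
  set G2 : ℝ := ∑ i, ∑ j, γ i j * γ j i with hG2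
  set Q2 : ℝ := ∑ i, ∑ j, (γ i j) ^ 2 with hQ2
  -- E[varEst]
  have hEV : (∫ ω, varEst α θ γ r1 ω ∂μ) = (1 / (N : ℝ) ^ 2) * A := by
    rw [HATEaux.integral_eq_sum hr0.le hr1.le h]
    rw [Finset.sum_congr rfl fun ω _ => by
      rw [HATEaux.varEst_eq α θ γ hr0 hr1 ω]]
    rw [HATEaux.E_smul, HATEaux.E_sum]
  -- E[2 * varEst]
  have hEV2 : (∫ ω, 2 * varEst α θ γ r1 ω ∂μ) = 2 * ((1 / (N : ℝ) ^ 2) * A) := by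
    rw [HATEaux.integral_eq_sum hr0.le hr1.le h, HATEaux.E_smul, ← hEV,
      HATEaux.integral_eq_sum hr0.le hr1.le h]
  -- E[tauDir]
  have hEtau : (∫ ω, tauDir α θ γ r1 ω ∂μ) = (N : ℝ)⁻¹ * ∑ i, θ i := by
    rw [HATEaux.integral_eq_sum hr0.le hr1.le h]
    rw [Finset.sum_congr rfl fun ω _ => by rw [HATEaux.tauDir_eq α θ γ r1 ω]]
    rw [HATEaux.E_smul, HATEaux.E_sum]
    rw [Finset.sum_congr rfl fun i _ => HATEaux.E_T hr0 hr1 hγ i]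
  -- E[tauDir ^ 2]
  have hEtau2 : (∫ ω, (tauDir α θ γ r1 ω) ^ 2 ∂μ)
      = ((N : ℝ)⁻¹) ^ 2 * ((∑ i, θ i) ^ 2 + G2 + A - Θ) := by
    rw [HATEaux.integral_eq_sum hr0.le hr1.le h]
    have hpt : ∀ ω : Fin N → Bool, (tauDir α θ γ r1 ω) ^ 2
        = ((N : ℝ)⁻¹) ^ 2 * ∑ i, ∑ j, HATEaux.Tf α θ γ r1 i ω * HATEaux.Tf α θ γ r1 j ω := by
      intro ω
      rw [HATEaux.tauDir_eq α θ γ r1 ω, mul_pow, sq (∑ i, HATEaux.Tf α θ γ r1 i ω),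
        Finset.sum_mul_sum]
    rw [Finset.sum_congr rfl fun ω _ => by rw [hpt ω]]
    rw [HATEaux.E_smul]
    congr 1
    rw [HATEaux.E_sum]
    have hrow : ∀ i : Fin N,
        (∑ ω : Fin N → Bool, HATEaux.w N r1 ω *
          (∑ j, HATEaux.Tf α θ γ r1 i ω * HATEaux.Tf α θ γ r1 j ω))
        = (∑ j, (θ i * θ j + γ i j * γ j i))
          + ((∑ ω : Fin N → Bool, HATEaux.w N r1 ω * (HATEaux.Tf α θ γ r1 i ω) ^ 2)
              - (θ i) ^ 2) := by
      intro i
      rw [HATEaux.E_sum (fun j ω => HATEaux.Tf α θ γ r1 i ω * HATEaux.Tf α θ γ r1 j ω)]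
      have hcell : ∀ j : Fin N,
          (∑ ω : Fin N → Bool, HATEaux.w N r1 ω *
            (HATEaux.Tf α θ γ r1 i ω * HATEaux.Tf α θ γ r1 j ω))
          = (θ i * θ j + γ i j * γ j i)
            + (if j = i then
                ((∑ ω : Fin N → Bool, HATEaux.w N r1 ω * (HATEaux.Tf α θ γ r1 i ω) ^ 2)
                  - (θ i) ^ 2) else 0) := by
        intro j
        by_cases hj : j = i
        · subst hj
          rw [Finset.sum_congr rfl fun ω _ => by rw [← sq (HATEaux.Tf α θ γ r1 j ω)]]
          simp [hγ j]; ring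
        · rw [HATEaux.E_TT hr0 hr1 hγ (fun hh => hj hh.symm)]
          simp [hj]
      rw [Finset.sum_congr rfl fun j _ => hcell j, Finset.sum_add_distrib,
        Finset.sum_ite_eq' Finset.univ i]
      simp
    rw [Finset.sum_congr rfl fun i _ => hrow i, Finset.sum_add_distrib]
    have hθθ : ∑ i, ∑ j, (θ i * θ j + γ i j * γ j i)
        = (∑ i, θ i) ^ 2 + G2 := by
      rw [hG2, sq, Finset.sum_mul_sum, ← Finset.sum_add_distrib]
      exact Finset.sum_congr rfl fun i _ => by rw [← Finset.sum_add_distrib]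
    rw [hθθ]
    rw [Finset.sum_sub_distrib]
    rw [hA, hΘ]
    ring
  -- variance
  have hmem : MeasureTheory.MemLp (tauDir α θ γ r1) 2 μ := MeasureTheory.MemLp.of_discrete
  have hvar : ProbabilityTheory.variance (tauDir α θ γ r1) μ
      = ((N : ℝ)⁻¹) ^ 2 * (G2 + A - Θ) := by
    rw [ProbabilityTheory.variance_eq_sub hmem]
    have hsq : (∫ ω, ((tauDir α θ γ r1) ^ 2) ω ∂μ) = ∫ ω, (tauDir α θ γ r1 ω) ^ 2 ∂μ := rfl
    rw [hsq, hEtau2, hEtau]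
    ring
  constructor
  · rw [hEV, hvar]
    rw [hΘ, hG2]
    field_simp
    ring
  · rw [hEV2, hvar]
    have hAQ : Q2 ≤ A := by
      rw [hA, hQ2]
      exact Finset.sum_le_sum fun i _ => HATEaux.E_Tsq_ge hr0 hr1 hγ i
    have hGQ : G2 ≤ Q2 := by
      rw [hG2, hQ2]
      have h2 : 2 * (∑ i, ∑ j, γ i j * γ j i) ≤ 2 * (∑ i, ∑ j, (γ i j) ^ 2) := by
        have hstep : ∑ i, ∑ j, (2 * (γ i j * γ j i))
            ≤ ∑ i, ∑ j, ((γ i j) ^ 2 + (γ j i) ^ 2) := by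
          refine Finset.sum_le_sum fun i _ => Finset.sum_le_sum fun j _ => ?_
          nlinarith [sq_nonneg (γ i j - γ j i)]
        have hswap : ∑ i, ∑ j, (γ j i) ^ 2 = ∑ i, ∑ j, (γ i j) ^ 2 := Finset.sum_comm
        have e1 : ∑ i, ∑ j, (2 * (γ i j * γ j i)) = 2 * ∑ i, ∑ j, γ i j * γ j i := by
          rw [Finset.mul_sum]
          exact Finset.sum_congr rfl fun i _ => by rw [Finset.mul_sum]
        have e2 : ∑ i, ∑ j, ((γ i j) ^ 2 + (γ j i) ^ 2)
            = ∑ i, ∑ j, (γ i j) ^ 2 + ∑ i, ∑ j, (γ j i) ^ 2 := by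
          rw [← Finset.sum_add_distrib]
          exact Finset.sum_congr rfl fun i _ => by rw [← Finset.sum_add_distrib]
        rw [e1, e2, hswap] at hstep
        linarith
      linarith
    have hΘ0 : 0 ≤ Θ := by
      rw [hΘ]; exact Finset.sum_nonneg fun i _ => sq_nonneg _
    have hinv : (0:ℝ) < ((N : ℝ)⁻¹) ^ 2 := by positivity
    have key : G2 + A - Θ ≤ 2 * A := by linarith
    calc ((N : ℝ)⁻¹) ^ 2 * (G2 + A - Θ) ≤ ((N : ℝ)⁻¹) ^ 2 * (2 * A) := by
          exact mul_le_mul_of_nonneg_left key hinv.le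
      _ = 2 * (1 / (N : ℝ) ^ 2 * A) := by field_simp
end
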